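/- Let A₁, …, A_n be pairwise disjoint finite sets, and for each i let B_i be a set of two-element subsets of A_i, let (φ_i, ψ_i) be a pair of conservative binary operations on A_i forming a tournament pair on B_i, and let m_i be a conservative ternary operation on A_i that is arithmetical on the set of two-element subsets of A_i not in B_i. Let G = A₁ ∪ ⋯ ∪ A_n. Then there exist conservative operations φ', ψ' : G → G → G and m' : G → G → G → G such that the restrictions of φ', ψ', m' to each A_i coincide with φ_i, ψ_i, m_i respectively, the pair (φ', ψ') is a tournament pair on B = (B₁ ∪ ⋯ ∪ B_n) ∪ { {a, b} : a ∈ A_i, b ∈ A_j, i ≠ j }, and m' is arithmetical on the union over i of the sets of two-element subsets of A_i not in B_i. -/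

import Mathlib

/-- A binary operation is conservative if it always returns one of its
arguments. -/
def Conservative2 {D : Type*} (f : D → D → D) : Prop :=
  ∀ x y : D, f x y = x ∨ f x y = y

/-- A ternary operation is conservative if it always returns one of its
arguments. -/
def Conservative3 {D : Type*} (m : D → D → D → D) : Prop :=
  ∀ x y z : D, m x y z = x ∨ m x y z = y ∨ m x y z = z

/-- `(φ, ψ)` is a tournament pair on a set `B` of two-element subsets of `D`:
on pairs in `B` both operations are commutative and they disagree, and on
two-element sets outside `B` both are the first projection. -/
def TournamentPair {D : Type*} (φ ψ : D → D → D) (B : Set (Set D)) : Prop :=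
  (∀ x y : D, x ≠ y → ({x, y} : Set D) ∈ B →
      φ x y = φ y x ∧ ψ x y = ψ y x ∧ φ x y ≠ ψ x y) ∧
  (∀ x y : D, x ≠ y → ({x, y} : Set D) ∉ B → φ x y = x ∧ ψ x y = x)

/-- `m` is arithmetical on a set `S` of two-element subsets of `D`. -/
def ArithmeticalOn {D : Type*} (m : D → D → D → D) (S : Set (Set D)) : Prop :=
  ∀ s ∈ S, ∀ x ∈ s, ∀ y ∈ s, m x x y = y ∧ m y x x = y ∧ m y x y = y
/-!
Inside a sort the glued operations are the given ones. Across sorts, fix a linear order on the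
sorts: `φ'` returns the element of the smaller sort and `ψ'` the one of the larger sort, which makes
every cross-sort pair a tournament pair, and `m'` is the first projection as soon as its arguments
do not all lie in one sort. Cross-sort pairs then never meet the set on which `m'` has to be
arithmetical, and all other requirements reduce to the ones for the single sorts.
-/

section Gluing

variable {ι : Type*} {A : ι → Type*}

def sortPairs (P : ∀ i, Set (A i) → Prop) : Set (Set (Σ i, A i)) :=
  {s | ∃ i, ∃ x y : A i, x ≠ y ∧ P i {x, y} ∧ s = {⟨i, x⟩, ⟨i, y⟩}}

def crossSortPairs : Set (Set (Σ i, A i)) :=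
  {s | ∃ i j, i ≠ j ∧ ∃ (x : A i) (y : A j), s = {⟨i, x⟩, ⟨j, y⟩}}

theorem mk_pair_mem_sortPairs_iff {P : ∀ i, Set (A i) → Prop} {i : ι} {x y : A i} :
    ({⟨i, x⟩, ⟨i, y⟩} : Set (Σ i, A i)) ∈ sortPairs P ↔ x ≠ y ∧ P i {x, y} := by
  constructor
  · rintro ⟨j, x', y', hne, hP, hs⟩
    rcases Set.pair_eq_pair_iff.1 hs with ⟨h₁, h₂⟩ | ⟨h₁, h₂⟩ <;>
      obtain ⟨rfl, ⟨⟩⟩ := Sigma.mk.inj_iff.1 h₁ <;> obtain ⟨-, ⟨⟩⟩ := Sigma.mk.inj_iff.1 h₂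
    · exact ⟨hne, hP⟩
    · exact ⟨hne.symm, Set.pair_comm x y ▸ hP⟩
  · rintro ⟨hne, hP⟩
    exact ⟨i, x, y, hne, hP, rfl⟩

theorem mk_pair_notMem_crossSortPairs (i : ι) (x y : A i) :
    ({⟨i, x⟩, ⟨i, y⟩} : Set (Σ i, A i)) ∉ crossSortPairs := by
  rintro ⟨j, k, hjk, x', y', hs⟩
  rcases Set.pair_eq_pair_iff.1 hs with ⟨h₁, h₂⟩ | ⟨h₁, h₂⟩
  · exact hjk ((congrArg Sigma.fst h₁).symm.trans (congrArg Sigma.fst h₂))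
  · exact hjk ((congrArg Sigma.fst h₂).symm.trans (congrArg Sigma.fst h₁))

section Glue

variable [DecidableEq ι]

def glueBinary (f : ∀ i, A i → A i → A i) (g : (Σ i, A i) → (Σ i, A i) → Σ i, A i)
    (a b : Σ i, A i) : Σ i, A i :=
  if h : b.1 = a.1 then ⟨a.1, f a.1 a.2 (h ▸ b.2)⟩ else g a b

def glueTernary (m : ∀ i, A i → A i → A i → A i) (a b c : Σ i, A i) : Σ i, A i :=
  if h : b.1 = a.1 ∧ c.1 = a.1 then ⟨a.1, m a.1 a.2 (h.1 ▸ b.2) (h.2 ▸ c.2)⟩ else a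

variable {f : ∀ i, A i → A i → A i} {g : (Σ i, A i) → (Σ i, A i) → Σ i, A i}

@[simp]
theorem glueBinary_mk_mk (i : ι) (x y : A i) :
    glueBinary f g ⟨i, x⟩ ⟨i, y⟩ = ⟨i, f i x y⟩ := by
  simp [glueBinary]

theorem glueBinary_mk_mk_of_ne {i j : ι} (h : i ≠ j) (x : A i) (y : A j) :
    glueBinary f g ⟨i, x⟩ ⟨j, y⟩ = g ⟨i, x⟩ ⟨j, y⟩ :=
  dif_neg (Ne.symm h)

@[simp]
theorem glueTernary_mk_mk_mk (m : ∀ i, A i → A i → A i → A i) (i : ι) (x y z : A i) :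
    glueTernary m ⟨i, x⟩ ⟨i, y⟩ ⟨i, z⟩ = ⟨i, m i x y z⟩ := by
  simp [glueTernary]

theorem conservative2_glueBinary (hf : ∀ i, Conservative2 (f i))
    (hg : ∀ a b : Σ i, A i, a.1 ≠ b.1 → g a b = a ∨ g a b = b) :
    Conservative2 (glueBinary f g) := by
  rintro ⟨i, x⟩ ⟨j, y⟩
  by_cases hij : i = j
  · subst hij
    rcases hf i x y with h | h <;> simp [h]
  · rw [glueBinary_mk_mk_of_ne hij]
    exact hg _ _ hij

theorem conservative3_glueTernary {m : ∀ i, A i → A i → A i → A i}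
    (hm : ∀ i, Conservative3 (m i)) : Conservative3 (glueTernary m) := by
  rintro ⟨i, x⟩ ⟨j, y⟩ ⟨k, z⟩
  by_cases hij : j = i
  · subst hij
    by_cases hjk : k = j
    · subst hjk
      rcases hm k x y z with h | h | h <;> simp [h]
    · simp [glueTernary, hjk]
  · simp [glueTernary, hij]

theorem tournamentPair_glueBinary {φ ψ : ∀ i, A i → A i → A i} {B : ∀ i, Set (Set (A i))}
    {g h : (Σ i, A i) → (Σ i, A i) → Σ i, A i}
    (htp : ∀ i, TournamentPair (φ i) (ψ i) (B i))
    (hgh : ∀ a b : Σ i, A i, a.1 ≠ b.1 → g a b = g b a ∧ h a b = h b a ∧ g a b ≠ h a b) :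
    TournamentPair (glueBinary φ g) (glueBinary ψ h)
      (sortPairs (fun i s => s ∈ B i) ∪ crossSortPairs) := by
  constructor
  · rintro ⟨i, x⟩ ⟨j, y⟩ hne hmem
    by_cases hij : i = j
    · subst hij
      have hxB : ({x, y} : Set (A i)) ∈ B i := by
        rcases hmem with hmem | hmem
        · exact (mk_pair_mem_sortPairs_iff.1 hmem).2
        · exact absurd hmem (mk_pair_notMem_crossSortPairs i x y)
      have hxy : x ≠ y := fun h => hne (h ▸ rfl)
      obtain ⟨hφ, hψ, hφψ⟩ := (htp i).1 x y hxy hxB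
      exact ⟨by simp [hφ], by simp [hψ], by simpa using hφψ⟩
    · simp only [glueBinary_mk_mk_of_ne hij, glueBinary_mk_mk_of_ne (Ne.symm hij)]
      exact hgh _ _ hij
  · rintro ⟨i, x⟩ ⟨j, y⟩ hne hnot
    by_cases hij : i = j
    · subst hij
      have hxy : x ≠ y := fun h => hne (h ▸ rfl)
      have hxB : ({x, y} : Set (A i)) ∉ B i := fun hxB =>
        hnot (Or.inl (mk_pair_mem_sortPairs_iff.2 ⟨hxy, hxB⟩))
      obtain ⟨hφ, hψ⟩ := (htp i).2 x y hxy hxB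
      simp [hφ, hψ]
    · exact absurd (Or.inr ⟨i, j, hij, x, y, rfl⟩) hnot

theorem arithmeticalOn_glueTernary {m : ∀ i, A i → A i → A i → A i}
    {P : ∀ i, Set (A i) → Prop}
    (har : ∀ i, ArithmeticalOn (m i) {s | (∃ x y : A i, x ≠ y ∧ s = {x, y}) ∧ P i s}) :
    ArithmeticalOn (glueTernary m) (sortPairs P) := by
  rintro s ⟨i, a, b, hab, hP, rfl⟩ p hp q hq
  have mem_pair : ∀ r ∈ ({⟨i, a⟩, ⟨i, b⟩} : Set (Σ i, A i)),
      ∃ x ∈ ({a, b} : Set (A i)), r = ⟨i, x⟩ := by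
    rintro r (rfl | rfl) <;> simp
  obtain ⟨x, hx, rfl⟩ := mem_pair p hp
  obtain ⟨y, hy, rfl⟩ := mem_pair q hq
  obtain ⟨h₁, h₂, h₃⟩ := har i {a, b} ⟨⟨a, b, hab, rfl⟩, hP⟩ x hx y hy
  simp [h₁, h₂, h₃]

end Glue

section SortOrder

variable [LinearOrder ι]

def minBySort (a b : Σ i, A i) : Σ i, A i := if a.1 ≤ b.1 then a else b

def maxBySort (a b : Σ i, A i) : Σ i, A i := if a.1 ≤ b.1 then b else a

theorem minBySort_eq_or_eq (a b : Σ i, A i) : minBySort a b = a ∨ minBySort a b = b := by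
  unfold minBySort; split <;> simp

theorem maxBySort_eq_or_eq (a b : Σ i, A i) : maxBySort a b = a ∨ maxBySort a b = b := by
  unfold maxBySort; split <;> simp

theorem minBySort_maxBySort_of_fst_ne {a b : Σ i, A i} (h : a.1 ≠ b.1) :
    minBySort a b = minBySort b a ∧ maxBySort a b = maxBySort b a ∧
      minBySort a b ≠ maxBySort a b := by
  have hab : a ≠ b := fun hab => h (hab ▸ rfl)
  rcases h.lt_or_gt with hlt | hlt <;>
    simp [minBySort, maxBySort, hlt.le, hlt.not_ge, hab, hab.symm]

end SortOrder

end Gluing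

theorem multi_sorted_gluing_general {n : ℕ} (A : Fin n → Type*)
    (B : ∀ i, Set (Set (A i)))
    (φ ψ : ∀ i, A i → A i → A i) (m : ∀ i, A i → A i → A i → A i)
    (hφ : ∀ i, Conservative2 (φ i)) (hψ : ∀ i, Conservative2 (ψ i))
    (hm : ∀ i, Conservative3 (m i))
    (htp : ∀ i, TournamentPair (φ i) (ψ i) (B i))
    (har : ∀ i, ArithmeticalOn (m i)
      {s : Set (A i) | (∃ x y : A i, x ≠ y ∧ s = {x, y}) ∧ s ∉ B i}) :
    ∃ (φ' ψ' : (Σ i, A i) → (Σ i, A i) → (Σ i, A i))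
      (m' : (Σ i, A i) → (Σ i, A i) → (Σ i, A i) → (Σ i, A i)),
      Conservative2 φ' ∧ Conservative2 ψ' ∧ Conservative3 m' ∧
      (∀ i, ∀ x y : A i, φ' ⟨i, x⟩ ⟨i, y⟩ = ⟨i, φ i x y⟩) ∧
      (∀ i, ∀ x y : A i, ψ' ⟨i, x⟩ ⟨i, y⟩ = ⟨i, ψ i x y⟩) ∧
      (∀ i, ∀ x y z : A i, m' ⟨i, x⟩ ⟨i, y⟩ ⟨i, z⟩ = ⟨i, m i x y z⟩) ∧
      TournamentPair φ' ψ'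
        ({s : Set (Σ i, A i) | ∃ i, ∃ x y : A i, x ≠ y ∧
            ({x, y} : Set (A i)) ∈ B i ∧
            s = ({⟨i, x⟩, ⟨i, y⟩} : Set (Σ i, A i))} ∪
         {s : Set (Σ i, A i) | ∃ i j, i ≠ j ∧ ∃ (x : A i) (y : A j),
            s = ({⟨i, x⟩, ⟨j, y⟩} : Set (Σ i, A i))}) ∧
      ArithmeticalOn m'
        {s : Set (Σ i, A i) | ∃ i, ∃ x y : A i, x ≠ y ∧
            ({x, y} : Set (A i)) ∉ B i ∧
            s = ({⟨i, x⟩, ⟨i, y⟩} : Set (Σ i, A i))} :=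
  ⟨glueBinary φ minBySort, glueBinary ψ maxBySort, glueTernary m,
    conservative2_glueBinary hφ fun a b _ => minBySort_eq_or_eq a b,
    conservative2_glueBinary hψ fun a b _ => maxBySort_eq_or_eq a b,
    conservative3_glueTernary hm,
    glueBinary_mk_mk, glueBinary_mk_mk, glueTernary_mk_mk_mk m,
    tournamentPair_glueBinary htp fun _ _ => minBySort_maxBySort_of_fst_ne,
    arithmeticalOn_glueTernary (P := fun i s => s ∉ B i) har⟩

/-- Gluing multi-sorted operations: tournament pairs `(φ i, ψ i)` on `B i` and
arithmetical operations `m i` on the complements of `B i` on pairwise disjoint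
finite sets `A i` extend to operations on the disjoint union `G = Σ i, A i`
forming a tournament pair on the union of the `B i` together with all
cross-sort pairs, and an operation arithmetical on the union of the
complements. -/
theorem multi_sorted_gluing {n : ℕ} (A : Fin n → Type*) [∀ i, Fintype (A i)]
    (B : ∀ i, Set (Set (A i)))
    (hB : ∀ i, ∀ b ∈ B i, ∃ x y : A i, x ≠ y ∧ b = {x, y})
    (φ ψ : ∀ i, A i → A i → A i) (m : ∀ i, A i → A i → A i → A i)
    (hφ : ∀ i, Conservative2 (φ i)) (hψ : ∀ i, Conservative2 (ψ i))
    (hm : ∀ i, Conservative3 (m i))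
    (htp : ∀ i, TournamentPair (φ i) (ψ i) (B i))
    (har : ∀ i, ArithmeticalOn (m i)
      {s : Set (A i) | (∃ x y : A i, x ≠ y ∧ s = {x, y}) ∧ s ∉ B i}) :
    ∃ (φ' ψ' : (Σ i, A i) → (Σ i, A i) → (Σ i, A i))
      (m' : (Σ i, A i) → (Σ i, A i) → (Σ i, A i) → (Σ i, A i)),
      Conservative2 φ' ∧ Conservative2 ψ' ∧ Conservative3 m' ∧
      (∀ i, ∀ x y : A i, φ' ⟨i, x⟩ ⟨i, y⟩ = ⟨i, φ i x y⟩) ∧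
      (∀ i, ∀ x y : A i, ψ' ⟨i, x⟩ ⟨i, y⟩ = ⟨i, ψ i x y⟩) ∧
      (∀ i, ∀ x y z : A i, m' ⟨i, x⟩ ⟨i, y⟩ ⟨i, z⟩ = ⟨i, m i x y z⟩) ∧
      TournamentPair φ' ψ'
        ({s : Set (Σ i, A i) | ∃ i, ∃ x y : A i, x ≠ y ∧
            ({x, y} : Set (A i)) ∈ B i ∧
            s = ({⟨i, x⟩, ⟨i, y⟩} : Set (Σ i, A i))} ∪
         {s : Set (Σ i, A i) | ∃ i j, i ≠ j ∧ ∃ (x : A i) (y : A j),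
            s = ({⟨i, x⟩, ⟨j, y⟩} : Set (Σ i, A i))}) ∧
      ArithmeticalOn m'
        {s : Set (Σ i, A i) | ∃ i, ∃ x y : A i, x ≠ y ∧
            ({x, y} : Set (A i)) ∉ B i ∧
            s = ({⟨i, x⟩, ⟨i, y⟩} : Set (Σ i, A i))} :=
  multi_sorted_gluing_general A B φ ψ m hφ hψ hm htp har
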